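/- arXiv:1303.4407 — 2 statements merged into one kernel-verified Lean document; each statement's English description precedes it below -/
import Mathlib

section
/- In the field ℝℝ of Puiseux series over ℝ, let S_K = 1/2 + Σ_{k=1}^{K} T^{k+1/k} for K ∈ ℕ. The set {ζ ∈ ℝℝ : ζ > S_K for all K ∈ ℕ} is nonempty (it contains 1) and has no least element: for every ζ ∈ ℝℝ with ζ > S_K for all K, there exists ξ ∈ ℝℝ with ξ < ζ and ξ > S_K for all K. In particular, the cut κ determined by the S_K is realized by no element of ℝℝ: for every ζ ∈ ℝℝ, either ζ < S_K for some K, or ζ > S_K for all K. -/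
/-! ### The field `ℝℝ` of Puiseux series over `ℝ` -/

/-- The Hahn series field with real coefficients and value group `ℚ`. -/
abbrev HS : Type := HahnSeries ℚ ℝ

/-- A Hahn series is a Puiseux series when its support is contained in `(1/d)ℤ`
for some positive integer `d`. -/
def IsPuiseux (x : HS) : Prop :=
  ∃ d : ℕ, 0 < d ∧ ∀ q ∈ x.support, ∃ n : ℤ, q = (n : ℚ) / (d : ℚ)

theorem isPuiseux_inv {x : HS} (hx : IsPuiseux x) : IsPuiseux x⁻¹ := by
  rcases eq_or_ne x 0 with rfl | hx0
  · rw [inv_zero]; exact ⟨1, one_pos, by simp⟩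
  obtain ⟨d, hd, h⟩ := hx
  have hd0 : (d : ℚ) ≠ 0 := Nat.cast_ne_zero.mpr hd.ne'
  have hDadd : ∀ p q : ℚ, (∃ n : ℤ, p = (n : ℚ) / d) → (∃ n : ℤ, q = (n : ℚ) / d) →
      ∃ n : ℤ, p + q = (n : ℚ) / d := by
    rintro p q ⟨n, rfl⟩ ⟨m, rfl⟩
    exact ⟨n + m, by push_cast; field_simp⟩
  have horder : ∃ n : ℤ, x.order = (n : ℚ) / d := by
    refine h _ ?_
    rw [HahnSeries.order_of_ne hx0]
    exact (x.isWF_support).min_mem _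
  have hlc : (x.leadingCoeff)⁻¹ * x.leadingCoeff = 1 :=
    inv_mul_cancel₀ (HahnSeries.leadingCoeff_ne_zero.mpr hx0)
  have hwo : 0 < (1 - HahnSeries.single (-x.order) (x.leadingCoeff)⁻¹ * x).orderTop :=
    HahnSeries.unit_aux x hlc (-x.order) (neg_add_cancel _)
  have hsupp_single : ∀ (r : ℝ) (q : ℚ),
      q ∈ (HahnSeries.single (-x.order) r * x).support → ∃ n : ℤ, q = (n : ℚ) / d := by
    intro r q hq
    obtain ⟨i, hi, j, hj, rfl⟩ := HahnSeries.support_mul_subset hq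
    have hi' : i = -x.order := HahnSeries.support_single_subset hi
    obtain ⟨n, hn⟩ := horder
    obtain ⟨m, hm⟩ := h j hj
    exact hDadd i j ⟨-n, by rw [hi', hn]; push_cast; ring⟩ ⟨m, hm⟩
  have hsupp_w : ∀ q ∈ (1 - HahnSeries.single (-x.order) (x.leadingCoeff)⁻¹ * x).support,
      ∃ n : ℤ, q = (n : ℚ) / d := by
    intro q hq
    rw [sub_eq_add_neg] at hq
    rcases HahnSeries.support_add_subset _ _ hq with h1 | h2
    · rw [HahnSeries.support_one] at h1
      exact ⟨0, by simp_all⟩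
    · rw [HahnSeries.support_neg] at h2
      exact hsupp_single _ q h2
  have hpow : ∀ (m : ℕ) (q : ℚ),
      q ∈ ((1 - HahnSeries.single (-x.order) (x.leadingCoeff)⁻¹ * x) ^ m).support →
      ∃ n : ℤ, q = (n : ℚ) / d := by
    intro m
    induction m with
    | zero =>
      intro q hq
      rw [pow_zero, HahnSeries.support_one] at hq
      exact ⟨0, by simp_all⟩
    | succ m ih =>
      intro q hq
      rw [pow_succ] at hq
      obtain ⟨i, hi, j, hj, rfl⟩ := HahnSeries.support_mul_subset hq
      exact hDadd i j (ih i hi) (hsupp_w j hj)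
  have hsum_supp : ∀ q ∈ (HahnSeries.SummableFamily.powers (1 - HahnSeries.single (-x.order) (x.leadingCoeff)⁻¹ * x)).hsum.support,
      ∃ n : ℤ, q = (n : ℚ) / d := by
    intro q hq
    obtain ⟨s, hs⟩ := Set.mem_iUnion.mp (HahnSeries.SummableFamily.support_hsum_subset hq)
    rw [HahnSeries.SummableFamily.powers_of_orderTop_pos hwo] at hs
    exact hpow s q hs
  have hy : ((HahnSeries.SummableFamily.powers (1 - HahnSeries.single (-x.order) (x.leadingCoeff)⁻¹ * x)).hsum *
      HahnSeries.single (-x.order) (x.leadingCoeff)⁻¹) * x = 1 := by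
    have h1 := HahnSeries.SummableFamily.one_sub_self_mul_hsum_powers hwo
    calc ((HahnSeries.SummableFamily.powers (1 - HahnSeries.single (-x.order) (x.leadingCoeff)⁻¹ * x)).hsum *
          HahnSeries.single (-x.order) (x.leadingCoeff)⁻¹) * x
        = (1 - (1 - HahnSeries.single (-x.order) (x.leadingCoeff)⁻¹ * x)) *
            (HahnSeries.SummableFamily.powers (1 - HahnSeries.single (-x.order) (x.leadingCoeff)⁻¹ * x)).hsum := by ring
      _ = 1 := h1
  have hxinv : x⁻¹ = (HahnSeries.SummableFamily.powers (1 - HahnSeries.single (-x.order) (x.leadingCoeff)⁻¹ * x)).hsum *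
      HahnSeries.single (-x.order) (x.leadingCoeff)⁻¹ :=
    (eq_inv_of_mul_eq_one_left hy).symm
  rw [hxinv]
  refine ⟨d, hd, fun q hq => ?_⟩
  obtain ⟨i, hi, j, hj, rfl⟩ := HahnSeries.support_mul_subset hq
  have hj' : j = -x.order := HahnSeries.support_single_subset hj
  obtain ⟨n, hn⟩ := horder
  exact hDadd i j (hsum_supp i hi) ⟨-n, by rw [hj', hn]; push_cast; ring⟩

/-- The field `ℝℝ` of Puiseux series over `ℝ`, as a subfield of the Hahn series field. -/
noncomputable def puiseuxSubfield : Subfield HS where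
  carrier := {x | IsPuiseux x}
  zero_mem' := ⟨1, one_pos, by simp⟩
  one_mem' := by
    refine ⟨1, one_pos, fun q hq => ⟨0, ?_⟩⟩
    rw [HahnSeries.support_one] at hq
    simp_all
  add_mem' := by
    rintro x y ⟨d, hd, h⟩ ⟨e, he, k⟩
    have hd0 : (d : ℚ) ≠ 0 := Nat.cast_ne_zero.mpr hd.ne'
    have he0 : (e : ℚ) ≠ 0 := Nat.cast_ne_zero.mpr he.ne'
    refine ⟨d * e, Nat.mul_pos hd he, fun q hq => ?_⟩
    rcases HahnSeries.support_add_subset _ _ hq with hq' | hq'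
    · obtain ⟨n, hn⟩ := h q hq'
      refine ⟨n * e, ?_⟩
      rw [hn]; push_cast; field_simp
    · obtain ⟨n, hn⟩ := k q hq'
      refine ⟨n * d, ?_⟩
      rw [hn]; push_cast; field_simp
  neg_mem' := by
    rintro x ⟨d, hd, h⟩
    exact ⟨d, hd, fun q hq => h q (by rwa [HahnSeries.support_neg] at hq)⟩
  mul_mem' := by
    rintro x y ⟨d, hd, h⟩ ⟨e, he, k⟩
    have hd0 : (d : ℚ) ≠ 0 := Nat.cast_ne_zero.mpr hd.ne'
    have he0 : (e : ℚ) ≠ 0 := Nat.cast_ne_zero.mpr he.ne'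
    refine ⟨d * e, Nat.mul_pos hd he, fun q hq => ?_⟩
    obtain ⟨i, hi, j, hj, rfl⟩ := HahnSeries.support_mul_subset hq
    obtain ⟨n, hn⟩ := h i hi
    obtain ⟨m, hm⟩ := k j hj
    refine ⟨n * e + m * d, ?_⟩
    rw [hn, hm]; push_cast; field_simp
  inv_mem' := fun x hx => isPuiseux_inv hx

/-- The field `ℝℝ` of Puiseux series over `ℝ`. -/
abbrev RR : Type := ↥puiseuxSubfield

theorem lc_eq_coeff_order {x : HS} (hx : x ≠ 0) : x.leadingCoeff = x.coeff x.order := by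
  exact HahnSeries.leadingCoeff_eq

theorem lc_add_pos {a b : HS} (ha : 0 < a.leadingCoeff) (hb : 0 < b.leadingCoeff) :
    0 < (a + b).leadingCoeff := by
  have ha0 : a ≠ 0 := HahnSeries.leadingCoeff_ne_zero.mp ha.ne'
  have hb0 : b ≠ 0 := HahnSeries.leadingCoeff_ne_zero.mp hb.ne'
  have key : ∀ c d : HS, c ≠ 0 → d ≠ 0 → 0 < c.leadingCoeff → 0 < d.leadingCoeff →
      c.order ≤ d.order → 0 < (c + d).leadingCoeff := by
    intro c d hc0 hd0 hc hd hcd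
    rcases lt_or_eq_of_le hcd with hlt | heq
    · have hdc : d.coeff c.order = 0 := HahnSeries.coeff_eq_zero_of_lt_order hlt
      have hco : (c + d).coeff c.order = c.leadingCoeff := by
        rw [HahnSeries.coeff_add, hdc, add_zero, lc_eq_coeff_order hc0]
      have hne : (c + d).coeff c.order ≠ 0 := by rw [hco]; exact hc.ne'
      have hcd0 : c + d ≠ 0 := fun h => hne (by simp [h])
      have h1 : (c + d).order ≤ c.order := HahnSeries.order_le_of_coeff_ne_zero hne
      have h2 : min c.order d.order ≤ (c + d).order := HahnSeries.min_order_le_order_add hcd0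
      rw [min_eq_left hlt.le] at h2
      have h3 : (c + d).order = c.order := le_antisymm h1 h2
      rw [lc_eq_coeff_order hcd0, h3, hco]; exact hc
    · have hco : (c + d).coeff c.order = c.leadingCoeff + d.leadingCoeff := by
        rw [HahnSeries.coeff_add, lc_eq_coeff_order hc0, lc_eq_coeff_order hd0, heq]
      have hpos : (0:ℝ) < c.leadingCoeff + d.leadingCoeff := by linarith
      have hne : (c + d).coeff c.order ≠ 0 := by rw [hco]; exact hpos.ne'
      have hcd0 : c + d ≠ 0 := fun h => hne (by simp [h])
      have h1 : (c + d).order ≤ c.order := HahnSeries.order_le_of_coeff_ne_zero hne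
      have h2 : min c.order d.order ≤ (c + d).order := HahnSeries.min_order_le_order_add hcd0
      rw [← heq, min_self] at h2
      have h3 : (c + d).order = c.order := le_antisymm h1 h2
      rw [lc_eq_coeff_order hcd0, h3, hco]; exact hpos
  rcases le_total a.order b.order with h | h
  · exact key a b ha0 hb0 ha hb h
  · rw [add_comm]; exact key b a hb0 ha0 hb ha h

theorem leadingCoeff_neg' (z : HS) : (-z).leadingCoeff = -z.leadingCoeff := by
  rcases eq_or_ne z 0 with rfl | hz
  · simp
  · have hz' : (-z) ≠ 0 := neg_ne_zero.mpr hz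
    exact HahnSeries.leadingCoeff_neg

/-- The linear order on Puiseux series: a nonzero series is positive if and only if its
leading coefficient (the coefficient of its lowest-exponent term) is positive. -/
noncomputable instance : LinearOrder RR where
  lt x y := 0 < ((y : HS) - (x : HS)).leadingCoeff
  le x y := x = y ∨ 0 < ((y : HS) - (x : HS)).leadingCoeff
  le_refl x := Or.inl rfl
  le_trans := by
    rintro x y z (rfl | h1) h2
    · exact h2
    · rcases h2 with rfl | h2
      · exact Or.inr h1
      · refine Or.inr ?_
        have e : (z : HS) - (x : HS) = ((y : HS) - (x : HS)) + ((z : HS) - (y : HS)) := by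
          ring
        rw [e]
        exact lc_add_pos h1 h2
  le_antisymm := by
    rintro x y (rfl | h1) h2
    · rfl
    · rcases h2 with rfl | h2
      · rfl
      · exfalso
        have e : (x : HS) - (y : HS) = -((y : HS) - (x : HS)) := by ring
        rw [e, leadingCoeff_neg'] at h2
        linarith
  le_total := by
    intro x y
    rcases eq_or_ne x y with rfl | hxy
    · exact Or.inl (Or.inl rfl)
    · have hne : (y : HS) - (x : HS) ≠ 0 :=
        sub_ne_zero.mpr fun h => hxy (Subtype.coe_injective h.symm)
      have h := HahnSeries.leadingCoeff_ne_zero.mpr hne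
      rcases lt_or_gt_of_ne h with h' | h'
      · refine Or.inr (Or.inr ?_)
        have e : (x : HS) - (y : HS) = -((y : HS) - (x : HS)) := by ring
        rw [e, leadingCoeff_neg']
        linarith
      · exact Or.inl (Or.inr h')
  lt_iff_le_not_ge := by
    intro x y
    constructor
    · intro h
      change 0 < ((y : HS) - (x : HS)).leadingCoeff at h
      refine ⟨Or.inr h, ?_⟩
      rintro (rfl | h')
      · simp at h
      · have e : (x : HS) - (y : HS) = -((y : HS) - (x : HS)) := by ring
        rw [e, leadingCoeff_neg'] at h'
        linarith
    · rintro ⟨rfl | h, hn⟩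
      · exact absurd (Or.inl rfl) hn
      · exact h
  toDecidableLE := Classical.decRel _

/-- `ℝℝ` is an ordered field extension of `ℝ`. -/
noncomputable instance : IsStrictOrderedRing RR :=
  haveI : IsOrderedAddMonoid RR :=
    { add_le_add_left := by
        rintro x y (rfl | h) c
        · exact Or.inl rfl
        · refine Or.inr ?_
          convert h using 2
          push_cast; ring }
  haveI : ZeroLEOneClass RR :=
    { zero_le_one := by
        refine Or.inr ?_
        have e : ((1 : RR) : HS) - ((0 : RR) : HS) = (1 : HS) := by push_cast; ring
        rw [e, HahnSeries.leadingCoeff_one]; norm_num }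
  IsStrictOrderedRing.of_mul_pos (by
      intro x y hx hy
      change 0 < ((x : HS) - ((0 : RR) : HS)).leadingCoeff at hx
      change 0 < ((y : HS) - ((0 : RR) : HS)).leadingCoeff at hy
      change 0 < (((x * y : RR) : HS) - ((0 : RR) : HS)).leadingCoeff
      have e : ∀ a : RR, (a : HS) - ((0 : RR) : HS) = (a : HS) := fun a => by push_cast; ring
      rw [e] at hx hy ⊢
      have hx0 : (x : HS) ≠ 0 := HahnSeries.leadingCoeff_ne_zero.mp hx.ne'
      have hy0 : (y : HS) ≠ 0 := HahnSeries.leadingCoeff_ne_zero.mp hy.ne'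
      have hcoe : ((x * y : RR) : HS) = (x : HS) * (y : HS) := by push_cast; ring
      have hxy : (x : HS) * (y : HS) ≠ 0 := mul_ne_zero hx0 hy0
      rw [hcoe]
      have h1 : ((x : HS) * (y : HS)).order = (x : HS).order + (y : HS).order :=
        HahnSeries.order_mul_of_ne_zero
          (mul_ne_zero (HahnSeries.leadingCoeff_ne_zero.mpr hx0)
            (HahnSeries.leadingCoeff_ne_zero.mpr hy0))
      have h2 := HahnSeries.coeff_mul_order_add_order (x : HS) (y : HS)
      have h3 : ((x : HS) * (y : HS)).leadingCoeff
          = ((x : HS) * (y : HS)).coeff (((x : HS) * (y : HS)).order) :=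
        lc_eq_coeff_order hxy
      rw [h3, h1, h2]
      positivity)

/-- The indeterminate `T`, a positive infinitesimal of `ℝℝ`. -/
noncomputable def TT : RR :=
  ⟨HahnSeries.single (1 : ℚ) (1 : ℝ), 1, one_pos, fun q hq => ⟨1, by
    have h := HahnSeries.support_single_subset hq
    simp_all⟩⟩

/-- The monomial `T^q` of `ℝℝ`, for `q` a rational with denominator `d`. -/
noncomputable def Tmon (q : ℚ) (d : ℕ) (hd : 0 < d) (hq : ∃ n : ℤ, q = (n : ℚ) / (d : ℚ)) :
    RR :=
  ⟨HahnSeries.single q (1 : ℝ), d, hd, fun p hp => by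
    have h := HahnSeries.support_single_subset hp
    simp only [Set.mem_singleton_iff] at h
    exact h ▸ hq⟩

theorem SK_aux (k : ℕ) : ∃ n : ℤ, (k : ℚ) + 1 / (k : ℚ) = (n : ℚ) / ((max k 1 : ℕ) : ℚ) := by
  rcases Nat.eq_zero_or_pos k with hk | hk
  · subst hk; exact ⟨0, by norm_num⟩
  · refine ⟨(k : ℤ) ^ 2 + 1, ?_⟩
    rw [Nat.max_eq_left hk]
    have hk0 : (k : ℚ) ≠ 0 := Nat.cast_ne_zero.mpr hk.ne'
    push_cast
    field_simp

/-- The partial sums `S_K = 1/2 + Σ_{k=1}^{K} T^{k+1/k}` defining the cut `κ`.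
(For `k ≥ 1` the exponent `k + 1/k` has denominator `max k 1 = k`.) -/
noncomputable def SK (K : ℕ) : RR :=
  (1 / 2 : RR) + ∑ k ∈ Finset.Icc 1 K,
    Tmon ((k : ℚ) + 1 / (k : ℚ)) (max k 1) (by omega) (SK_aux k)

/-- `ζ < κ`: `ζ` lies below the cut `κ`, i.e. below some partial sum `S_K`. -/
def ltKappa (ζ : RR) : Prop := ∃ K : ℕ, ζ < SK K

/-- `ζ > κ`: `ζ` lies above the cut `κ`, i.e. above every partial sum `S_K`. -/
def gtKappa (ζ : RR) : Prop := ∀ K : ℕ, SK K < ζ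

/-!
`1 - S_K` starts with `1/2`, so `S_K < 1`. Let `ζ > S_K` for all `K`, with exponents of common
denominator `d`. Since `j + 1/j` has denominator `j`, `ζ` has no term `T^(j + 1/j)` for `j > d`;
hence `ζ - S_d` starts strictly below `T^(d+1 + 1/(d+1))`, as otherwise `ζ - S_(d+1)` would start
with `-T^(d+1 + 1/(d+1))`. All later terms of the `S_K`, and `T^N` for an integer `N` beyond
that exponent, are then too small to change the leading term of `ζ - S_d`, so `ξ = ζ - T^N`
still lies above every `S_K`. The dichotomy holds because the `S_K` strictly increase.
-/

open HahnSeries Finset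

theorem HahnSeries.le_orderTop_sum {Γ R ι : Type*} [LinearOrder Γ] [AddCommMonoid R]
    {s : Finset ι} {x : ι → HahnSeries Γ R} {g : WithTop Γ}
    (h : ∀ i ∈ s, g ≤ (x i).orderTop) : g ≤ (∑ i ∈ s, x i).orderTop :=
  Finset.sum_induction x (fun y => g ≤ y.orderTop)
    (fun _ _ ha hb => (le_min ha hb).trans min_orderTop_le_orderTop_add)
    (by simp) h

lemma lt_iff_zero_lt_leadingCoeff_sub {a b : RR} :
    a < b ↔ 0 < ((b : HS) - a).leadingCoeff := Iff.rfl

def cutExponent (k : ℕ) : ℚ := k + 1 / k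

lemma strictMonoOn_cutExponent : StrictMonoOn cutExponent (Set.Ici 1) := by
  intro k (hk : 1 ≤ k) j _ hkj
  have hk' : (1 : ℚ) ≤ k := by exact_mod_cast hk
  have hkj' : (k : ℚ) + 1 ≤ j := by exact_mod_cast hkj
  have hj : 0 < 1 / (j : ℚ) := one_div_pos.mpr (by linarith)
  have hk1 : 1 / (k : ℚ) ≤ 1 := by rw [div_le_one (by linarith)]; exact hk'
  simp only [cutExponent]
  linarith

lemma cutExponent_pos {k : ℕ} (hk : 1 ≤ k) : 0 < cutExponent k := by
  simp only [cutExponent]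
  exact add_pos_of_pos_of_nonneg (by exact_mod_cast hk) (by positivity)

-- `j + 1/j = n/d` forces `j ∣ d`.
lemma coeff_cutExponent_eq_zero {x : HS} {d j : ℕ} (hd : 0 < d)
    (hx : ∀ q ∈ x.support, ∃ n : ℤ, q = n / d) (hdj : d < j) :
    x.coeff (cutExponent j) = 0 := by
  by_contra hne
  obtain ⟨n, hn⟩ := hx _ hne
  have hj0 : (j : ℚ) ≠ 0 := by exact_mod_cast (hd.trans hdj).ne'
  have hd0 : (d : ℚ) ≠ 0 := by exact_mod_cast hd.ne'
  have hnQ : (n : ℚ) * j = d * j ^ 2 + d := by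
    rw [cutExponent] at hn
    field_simp at hn
    linear_combination -hn
  have hnZ : n * j = d * j ^ 2 + d := by exact_mod_cast hnQ
  have hdvd : (j : ℤ) ∣ d := ⟨n - d * j, by linear_combination -hnZ⟩
  have := Int.le_of_dvd (by exact_mod_cast hd) hdvd
  omega

lemma coe_SK (K : ℕ) :
    (SK K : HS) = single 0 (1 / 2) + ∑ k ∈ Ioc 0 K, single (cutExponent k) 1 := by
  rw [SK, Subfield.coe_add, ← Icc_add_one_left_eq_Ioc, zero_add]
  congr 1
  · rw [← C_apply, Subfield.coe_div, Subfield.coe_one, map_div₀, map_one]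
    rfl
  · exact map_sum puiseuxSubfield.subtype _ _

lemma coe_SK_eq_add {D K : ℕ} (hDK : D ≤ K) :
    (SK K : HS) = (SK D : HS) + ∑ k ∈ Ioc D K, single (cutExponent k) 1 := by
  rw [coe_SK, coe_SK, ← sum_Ioc_consecutive _ (Nat.zero_le D) hDK]
  ring

lemma cutExponent_le_orderTop_sum (D K : ℕ) :
    (cutExponent (D + 1) : WithTop ℚ) ≤
      (∑ k ∈ Ioc D K, single (cutExponent k) (1 : ℝ)).orderTop :=
  le_orderTop_sum fun k hk => by
    obtain ⟨hDk, -⟩ := mem_Ioc.mp hk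
    calc (cutExponent (D + 1) : WithTop ℚ) ≤ cutExponent k := by
          exact_mod_cast strictMonoOn_cutExponent.monotoneOn (by simp) (by simp; omega) hDk
      _ ≤ _ := orderTop_single_le

lemma coeff_SK_cutExponent {K j : ℕ} (hKj : K < j) : (SK K : HS).coeff (cutExponent j) = 0 := by
  have hj : 1 ≤ j := by omega
  rw [coe_SK, coeff_add, coeff_single_of_ne (cutExponent_pos hj).ne', coeff_sum, zero_add]
  refine sum_eq_zero fun k hk => ?_
  obtain ⟨hk0, hkK⟩ := mem_Ioc.mp hk
  exact coeff_single_of_ne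
    (strictMonoOn_cutExponent (Set.mem_Ici.mpr hk0) (Set.mem_Ici.mpr hj) (by omega)).ne'

lemma SK_lt_SK_succ (K : ℕ) : SK K < SK (K + 1) := by
  rw [lt_iff_zero_lt_leadingCoeff_sub, coe_SK_eq_add K.le_succ, add_sub_cancel_left,
    Nat.Ioc_succ_singleton, sum_singleton, leadingCoeff_of_single]
  exact one_pos

lemma strictMono_SK : StrictMono SK := strictMono_nat_of_lt_succ SK_lt_SK_succ

lemma SK_lt_one (K : ℕ) : SK K < 1 := by
  have hS : ((1 : RR) : HS) - (SK K : HS) =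
      single 0 (1 / 2) - ∑ k ∈ Ioc 0 K, single (cutExponent k) 1 := by
    have hhalf : (1 : HS) = single 0 (1 / 2) + single 0 (1 / 2) := by
      rw [← single_add, ← single_zero_one]
      norm_num
    rw [coe_SK, Subfield.coe_one, hhalf]
    abel
  have hlt : (single (0 : ℚ) (1 / 2 : ℝ)).orderTop
      < (∑ k ∈ Ioc 0 K, single (cutExponent k) (1 : ℝ)).orderTop := by
    rw [orderTop_single (by norm_num)]
    exact (WithTop.coe_lt_coe.mpr (cutExponent_pos le_rfl)).trans_le
      (cutExponent_le_orderTop_sum 0 K)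
  rw [lt_iff_zero_lt_leadingCoeff_sub, hS, leadingCoeff_sub hlt, leadingCoeff_of_single]
  norm_num

-- For `e = cutExponent (D + 1)`, neither `ζ` nor `S_D` has a term `T^e`, so if `ζ - S_D` did not
-- start below `e`, then `ζ - S_(D+1) = ζ - S_D - T^e` would start with `-T^e`.
lemma orderTop_sub_SK_lt {ζ : RR} {d D : ℕ} (hd : 0 < d)
    (hζ : ∀ q ∈ (ζ : HS).support, ∃ n : ℤ, q = n / d) (hdD : d ≤ D)
    (h : SK (D + 1) < ζ) :
    ((ζ : HS) - (SK D : HS)).orderTop < cutExponent (D + 1) := by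
  set e := cutExponent (D + 1)
  have hcoeff : ((ζ : HS) - (SK D : HS)).coeff e = 0 := by
    rw [coeff_sub, coeff_cutExponent_eq_zero hd hζ (by omega),
      coeff_SK_cutExponent D.lt_succ_self, sub_zero]
  by_contra! hle
  have hlt : (single e (1 : ℝ)).orderTop < ((ζ : HS) - (SK D : HS)).orderTop := by
    rw [orderTop_single one_ne_zero]
    exact lt_of_le_of_ne hle (orderTop_ne_of_coeff_eq_zero hcoeff).symm
  have hsucc : (ζ : HS) - (SK (D + 1) : HS) = ((ζ : HS) - (SK D : HS)) + -single e 1 := by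
    rw [coe_SK_eq_add D.le_succ, Nat.Ioc_succ_singleton, sum_singleton]
    ring
  rw [lt_iff_zero_lt_leadingCoeff_sub, hsucc,
    leadingCoeff_add_eq_right (by rwa [orderTop_neg]), leadingCoeff_neg,
    leadingCoeff_of_single] at h
  norm_num at h

lemma exists_lt_forall_SK_lt {ζ : RR} (hζ : ∀ K, SK K < ζ) :
    ∃ ξ < ζ, ∀ K, SK K < ξ := by
  obtain ⟨d, hd, hdenom⟩ := ζ.2
  obtain ⟨N, hN⟩ := exists_nat_gt (cutExponent (d + 1))
  set TN : RR := Tmon N 1 one_pos ⟨N, by simp⟩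
  have hTN : (TN : HS) = single (N : ℚ) 1 := rfl
  refine ⟨ζ - TN, ?_, fun K => ?_⟩
  · rw [lt_iff_zero_lt_leadingCoeff_sub, Subfield.coe_sub, sub_sub_cancel, hTN,
      leadingCoeff_of_single]
    exact one_pos
  refine (strictMono_SK.monotone (le_max_left K d)).trans_lt ?_
  set tail := ∑ k ∈ Ioc d (max K d), single (cutExponent k) (1 : ℝ) + single (N : ℚ) 1
    with htail
  have hsplit :
      ((ζ - TN : RR) : HS) - (SK (max K d) : HS) = ((ζ : HS) - (SK d : HS)) - tail := by
    rw [coe_SK_eq_add (le_max_right K d), Subfield.coe_sub, hTN, htail]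
    abel
  have hlt : ((ζ : HS) - (SK d : HS)).orderTop < tail.orderTop := by
    refine (orderTop_sub_SK_lt hd hdenom le_rfl (hζ (d + 1))).trans_le ?_
    refine (le_min (cutExponent_le_orderTop_sum d _) ?_).trans min_orderTop_le_orderTop_add
    exact (WithTop.coe_le_coe.mpr hN.le).trans orderTop_single_le
  rw [lt_iff_zero_lt_leadingCoeff_sub, hsplit, leadingCoeff_sub hlt]
  exact hζ d

/-- The set of elements of `ℝℝ` lying above the cut `κ` is nonempty (it contains `1`) and
has no least element; in particular every element of `ℝℝ` lies on one side or the other of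
the cut `κ`. -/
theorem statement7 :
    (∀ K : ℕ, SK K < 1) ∧
    (∀ ζ : RR, (∀ K, SK K < ζ) → ∃ ξ : RR, ξ < ζ ∧ ∀ K, SK K < ξ) ∧
    ∀ ζ : RR, (∃ K, ζ < SK K) ∨ (∀ K, SK K < ζ) := by
  refine ⟨SK_lt_one, fun ζ hζ => exists_lt_forall_SK_lt hζ, fun ζ => ?_⟩
  by_cases hbelow : ∃ K, ζ < SK K
  · exact Or.inl hbelow
  · push Not at hbelow
    exact Or.inr fun K => (SK_lt_SK_succ K).trans_le (hbelow (K + 1))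
end

section
/- Let f: ℝ → ℝ be any function, let n₁ ≠ n₂ be natural numbers, and set f_{n_i}(x) = f(x) + n_i·ε(x) for i = 1, 2. If M is an expansion of the real ordered field in which both f_{n₁} and f_{n₂} are definable with parameters, then the real exponential function is definable with parameters in M, and hence M is not polynomially bounded. -/
open FirstOrder

universe uL vL

/-- The function symbols of the language of an ordered ring expanded by a
family `G` of unary functions. -/
inductive FamFun (R : Type*) (G : Set (R → R)) : ℕ → Type _
  | unary : G → FamFun R G 1
  | add : FamFun R G 2
  | mul : FamFun R G 2

/-- The relation symbols: a single binary order relation. -/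
inductive OrdRel : ℕ → Type
  | le : OrdRel 2

/-- The language of the expansion of an ordered ring by a family `G` of unary functions. -/
def famLang (R : Type*) (G : Set (R → R)) : FirstOrder.Language :=
  ⟨FamFun R G, fun n => OrdRel n⟩

/-- The canonical interpretation of `famLang R G` on `R`. -/
noncomputable def famStr (R : Type*) [Add R] [Mul R] [LE R] (G : Set (R → R)) :
    (famLang R G).Structure R where
  funMap {n} f v :=
    match f with
    | .unary g => (g : R → R) (v 0)
    | .add => v 0 + v 1
    | .mul => v 0 * v 1
  RelMap {n} r v :=
    match r with
    | .le => v 0 ≤ v 1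

/-- A set `s ⊆ R^α` is definable with parameters in the expansion of the ordered
ring `R` by the unary functions in `G`. -/
def DefIn {R : Type*} [Add R] [Mul R] [LE R] (G : Set (R → R)) {α : Type}
    (s : Set (α → R)) : Prop :=
  @Set.Definable R Set.univ (famLang R G) (famStr R G) α s

/-- A function `g : R → R` is definable with parameters in the expansion of the ordered
ring `R` by the unary functions in `G`. -/
def DefFun {R : Type*} [Add R] [Mul R] [LE R] (G : Set (R → R)) (g : R → R) : Prop :=
  DefIn G {v : Fin 2 → R | g (v 0) = v 1}

/-- An (abstract) expansion of an ordered field `R`: a first-order structure with universe `R`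
whose parametrically definable sets include the order and the graphs of addition and
multiplication. -/
structure OFExpansion (R : Type*) [Add R] [Mul R] [LE R] : Type _ where
  Lang : FirstOrder.Language.{uL, vL}
  Str : Lang.Structure R
  definable_le : @Set.Definable R Set.univ Lang Str (Fin 2) {v | v 0 ≤ v 1}
  definable_add : @Set.Definable R Set.univ Lang Str (Fin 3) {v | v 0 + v 1 = v 2}
  definable_mul : @Set.Definable R Set.univ Lang Str (Fin 3) {v | v 0 * v 1 = v 2}

/-- A set is definable with parameters in the expansion `E`. -/
def OFExpansion.DefSet {R : Type*} [Add R] [Mul R] [LE R] (E : OFExpansion R) {α : Type}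
    (s : Set (α → R)) : Prop :=
  @Set.Definable R Set.univ E.Lang E.Str α s

/-- A function `g : R → R` is definable with parameters in the expansion `E`. -/
def OFExpansion.DefFun {R : Type*} [Add R] [Mul R] [LE R] (E : OFExpansion R) (g : R → R) :
    Prop :=
  E.DefSet {v : Fin 2 → R | g (v 0) = v 1}

/-- A first-order structure on a linearly ordered universe `R` is o-minimal when every
parametrically definable subset of `R` is a finite union of singletons and of open
intervals (with endpoints in `R ∪ {±∞}`). -/
def OMin {R : Type*} [Preorder R] (L : FirstOrder.Language) (S : L.Structure R) : Prop :=
  ∀ s : Set R, @Set.Definable R Set.univ L S (Fin 1) {v | v 0 ∈ s} →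
    ∃ (n : ℕ) (I : Fin n → Set R),
      (∀ i, (∃ a, I i = {a}) ∨ (∃ a b, I i = Set.Ioo a b) ∨ (∃ a, I i = Set.Ioi a) ∨
        (∃ a, I i = Set.Iio a) ∨ I i = Set.univ) ∧ s = ⋃ i, I i

/-- A first-order structure on `ℝ` is polynomially bounded when every parametrically
definable unary function is eventually bounded by a power function. -/
def PolyBdd (L : FirstOrder.Language) (S : L.Structure ℝ) : Prop :=
  ∀ g : ℝ → ℝ, @Set.Definable ℝ Set.univ L S (Fin 2) {v | g (v 0) = v 1} →
    ∃ d : ℕ, ∃ M : ℝ, ∀ x : ℝ, M ≤ x → |g x| ≤ x ^ d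

/-- The (finite) tuple `x : ι → ℝ` has transcendence degree at least `k` over `ℚ`,
i.e. it contains `k` algebraically independent entries. -/
def TrdegGE {ι : Type*} (x : ι → ℝ) (k : ℕ) : Prop :=
  ∃ s : Finset ι, k ≤ s.card ∧ AlgebraicIndependent ℚ (fun i : s => x i)

/-- `f : ℝ → ℝ` is a restricted analytic function: it vanishes outside `[0,1]` and agrees
on `[0,1]` with a function analytic on an open neighbourhood of `[0,1]`. -/
def IsRestrictedAnalytic (f : ℝ → ℝ) : Prop :=
  (∀ x, x ∉ Set.Icc (0 : ℝ) 1 → f x = 0) ∧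
  ∃ (U : Set ℝ) (F : ℝ → ℝ), IsOpen U ∧ Set.Icc (0 : ℝ) 1 ⊆ U ∧ AnalyticOnNhd ℝ F U ∧
    ∀ x ∈ Set.Icc (0 : ℝ) 1, f x = F x

/-- The tuple `(x₁, …, xₙ, F(x₁), …, Fⁿ(x₁), …, F⁽ᵐ⁾(x₁), …, F⁽ᵐ⁾(xₙ))` of the points of `x`
together with the values at these points of the derivatives of `F` up to order `m`. -/
noncomputable def jetTuple {n : ℕ} (F : ℝ → ℝ) (x : Fin n → ℝ) (m : ℕ) :
    Fin n ⊕ Fin (m + 1) × Fin n → ℝ :=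
  fun i => match i with
  | Sum.inl i => x i
  | Sum.inr (j, i) => iteratedDeriv j F (x i)

/-- `f : ℝ → ℝ` is a strongly transcendental restricted `C^∞` function (Le Gal):
it vanishes outside `[0,1]` and agrees on `[0,1]` with a `C^∞` function `F` on an open
neighbourhood `U` of `[0,1]` such that for every tuple of pairwise distinct points of `U` there
is `C ∈ ℕ` such that for all `m`, the transcendence degree over `ℚ` of the tuple of the points
and of the values of the first `m` derivatives of `F` at them is at least `n(m+2) - C`. -/
def IsStronglyTranscendentalFun (f : ℝ → ℝ) : Prop :=
  (∀ x, x ∉ Set.Icc (0 : ℝ) 1 → f x = 0) ∧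
  ∃ (U : Set ℝ) (F : ℝ → ℝ), IsOpen U ∧ Set.Icc (0 : ℝ) 1 ⊆ U ∧ ContDiffOn ℝ (⊤ : ℕ∞) F U ∧
    (∀ x ∈ Set.Icc (0 : ℝ) 1, f x = F x) ∧
    ∀ (n : ℕ) (x : Fin n → ℝ), (∀ i, x i ∈ U) → Function.Injective x →
      ∃ C : ℕ, ∀ m : ℕ, TrdegGE (jetTuple F x m) (n * (m + 2) - C)

/-- The function `ε(x) = e^{-1/x}` for `0 < x ≤ 1`, and `ε(x) = 0` otherwise. -/
noncomputable def eps : ℝ → ℝ := fun x =>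
  if 0 < x ∧ x ≤ 1 then Real.exp (-1 / x) else 0

/-- Membership in 𝒜: `f` agrees on `[0,1]` with a function analytic on an open
neighbourhood of `[0,1]` whose radius of convergence at each point of `[0,1]` is at
least `1`. (Only the values of `f` on `[0,1]` matter.) -/
def MemA (f : ℝ → ℝ) : Prop :=
  ∃ (U : Set ℝ) (F : ℝ → ℝ), IsOpen U ∧ Set.Icc (0 : ℝ) 1 ⊆ U ∧ AnalyticOnNhd ℝ F U ∧
    (∀ x ∈ Set.Icc (0 : ℝ) 1, f x = F x) ∧
    ∀ x ∈ Set.Icc (0 : ℝ) 1, ∃ p : FormalMultilinearSeries ℝ ℝ ℝ,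
      HasFPowerSeriesAt F p x ∧ 1 ≤ p.radius

/-- A polynomially bounded (abstract) expansion of the real ordered field: every definable
unary function is eventually bounded by a power function. -/
def PolyBddE (E : OFExpansion ℝ) : Prop :=
  ∀ g : ℝ → ℝ, E.DefFun g → ∃ d : ℕ, ∃ M : ℝ, ∀ x : ℝ, M ≤ x → |g x| ≤ x ^ d


section Statement9Helpers

open Filter

variable {E : OFExpansion ℝ}

lemma defset_inter {α : Type} {s t : Set (α → ℝ)} (hs : E.DefSet s) (ht : E.DefSet t) :
    E.DefSet (s ∩ t) := by
  letI := E.Str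
  exact Set.Definable.inter hs ht

lemma defset_compl {α : Type} {s : Set (α → ℝ)} (hs : E.DefSet s) :
    E.DefSet sᶜ := by
  letI := E.Str
  exact Set.Definable.compl hs

lemma defset_congr {α : Type} {s t : Set (α → ℝ)} (hs : E.DefSet s) (h : t = s) :
    E.DefSet t := h ▸ hs

lemma defset_lift {n m : ℕ} (j : Fin n → Fin m) {s : Set (Fin n → ℝ)} (hs : E.DefSet s) :
    E.DefSet {v : Fin m → ℝ | v ∘ j ∈ s} := by
  letI := E.Str
  exact Set.Definable.preimage_comp j hs

lemma defset_exists {n k : ℕ} {s : Set (Fin (n + k) → ℝ)} (hs : E.DefSet s) :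
    E.DefSet {v : Fin n → ℝ | ∃ w : Fin (n + k) → ℝ,
      (∀ i : Fin n, w (Fin.castAdd k i) = v i) ∧ w ∈ s} := by
  letI := E.Str
  have h := Set.Definable.image_comp hs (Fin.castAdd k : Fin n → Fin (n + k))
  convert (show E.DefSet _ from h) using 1
  ext v
  simp only [Set.mem_image, Set.mem_setOf_eq]
  constructor
  · rintro ⟨w, hw1, hw2⟩
    exact ⟨w, hw2, funext hw1⟩
  · rintro ⟨w, hw, rfl⟩
    exact ⟨w, fun i => rfl, hw⟩

/-- The equality graph is definable. -/
lemma defset_eq : E.DefSet {v : Fin 2 → ℝ | v 0 = v 1} := by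
  have h1 := E.definable_le
  have h2 := defset_lift (E := E) (![1, 0] : Fin 2 → Fin 2) E.definable_le
  have := defset_inter h2 h1
  apply defset_congr this
  ext v
  simp only [Set.mem_setOf_eq, Set.mem_inter_iff, Function.comp_apply]
  constructor
  · intro h'
    exact ⟨by simp [h'], le_of_eq h'⟩
  · rintro ⟨ha, hb⟩
    simp only [Matrix.cons_val_zero, Matrix.cons_val_one, Matrix.head_cons] at ha
    exact le_antisymm hb ha

/-- The singleton `{1}` is definable. -/
lemma defset_one : E.DefSet {v : Fin 1 → ℝ | v 0 = 1} := by
  have hmul := defset_lift (E := E) (fun _ : Fin 3 => (0 : Fin 1)) E.definable_mul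
  have hadd := defset_lift (E := E) (fun _ : Fin 3 => (0 : Fin 1)) E.definable_add
  have := defset_inter hmul (defset_compl hadd)
  apply defset_congr this
  ext v
  simp only [Set.mem_setOf_eq, Set.mem_inter_iff, Set.mem_compl_iff, Function.comp_apply]
  constructor
  · intro h'
    rw [h']; norm_num
  · rintro ⟨hm, ha⟩
    rcases mul_eq_zero.mp (show v 0 * (v 0 - 1) = 0 by nlinarith) with h | h
    · exact absurd (by rw [h]; ring) ha
    · linarith

/-- Multiplication by a positive natural number constant is definable. -/
lemma defset_nsmul (E : OFExpansion ℝ) (k : ℕ) :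
    E.DefSet {v : Fin 2 → ℝ | ((k + 1 : ℕ) : ℝ) * v 0 = v 1} := by
  induction k with
  | zero =>
    apply defset_congr (defset_eq (E := E))
    ext v; simp
  | succ k ih =>
    have hS : E.DefSet ({v : Fin 3 → ℝ | v ∘ ![0, 2] ∈
          {u : Fin 2 → ℝ | ((k + 1 : ℕ) : ℝ) * u 0 = u 1}} ∩
        {v : Fin 3 → ℝ | v ∘ ![2, 0, 1] ∈ {u : Fin 3 → ℝ | u 0 + u 1 = u 2}}) :=
      defset_inter (defset_lift _ ih) (defset_lift _ E.definable_add)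
    have h := defset_exists (n := 2) (k := 1) hS
    apply defset_congr h
    ext v
    simp only [Set.mem_setOf_eq, Set.mem_inter_iff, Function.comp_apply,
      Matrix.cons_val_zero, Matrix.cons_val_one, Matrix.head_cons, Matrix.cons_val_two,
      Matrix.tail_cons]
    constructor
    · intro hv
      refine ⟨![v 0, v 1, ((k + 1 : ℕ) : ℝ) * v 0], ?_, ?_, ?_⟩
      · intro i
        fin_cases i <;> rfl
      · rfl
      · show ((k + 1 : ℕ) : ℝ) * v 0 + v 0 = v 1
        rw [← hv]
        push_cast
        ring
    · rintro ⟨w, hw, h1, h2⟩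
      have e0 : w (Fin.castAdd 1 (0 : Fin 2)) = v 0 := hw 0
      have e1 : w (Fin.castAdd 1 (1 : Fin 2)) = v 1 := hw 1
      have e0' : w 0 = v 0 := e0
      have e1' : w 1 = v 1 := e1
      rw [e0'] at h1
      rw [e0', e1'] at h2
      rw [← h2, ← h1]
      push_cast
      ring

/-- If the difference of two definable functions is `k·eps` with `k ≠ 0`, then `eps` is
definable. -/
lemma defFun_eps {g₁ g₂ : ℝ → ℝ} {k : ℕ} (hk : k ≠ 0)
    (hg : ∀ x, g₂ x + (k : ℝ) * eps x = g₁ x)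
    (h₁ : E.DefFun g₁) (h₂ : E.DefFun g₂) : E.DefFun eps := by
  obtain ⟨m, rfl⟩ := Nat.exists_eq_succ_of_ne_zero hk
  -- coordinates: 0:x 1:y 2:a(=g₂ x) 3:b(=g₁ x) 4:w(=(m+1)·y)
  have hS : E.DefSet
      ({v : Fin 5 → ℝ | v ∘ ![0, 2] ∈ {u : Fin 2 → ℝ | g₂ (u 0) = u 1}} ∩
       ({v : Fin 5 → ℝ | v ∘ ![0, 3] ∈ {u : Fin 2 → ℝ | g₁ (u 0) = u 1}} ∩
        ({v : Fin 5 → ℝ | v ∘ ![1, 4] ∈ {u : Fin 2 → ℝ | ((m + 1 : ℕ) : ℝ) * u 0 = u 1}} ∩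
         {v : Fin 5 → ℝ | v ∘ ![2, 4, 3] ∈ {u : Fin 3 → ℝ | u 0 + u 1 = u 2}}))) :=
    defset_inter (defset_lift _ h₂)
      (defset_inter (defset_lift _ h₁)
        (defset_inter (defset_lift _ (defset_nsmul E m)) (defset_lift _ E.definable_add)))
  have h := defset_exists (n := 2) (k := 3) hS
  apply defset_congr h
  ext v
  simp only [Set.mem_setOf_eq, Set.mem_inter_iff, Function.comp_apply,
    Matrix.cons_val_zero, Matrix.cons_val_one, Matrix.head_cons, Matrix.cons_val_two,
    Matrix.tail_cons]
  constructor
  · intro hv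
    refine ⟨![v 0, v 1, g₂ (v 0), g₁ (v 0), ((m + 1 : ℕ) : ℝ) * v 1], ?_, rfl, rfl, rfl, ?_⟩
    · intro i; fin_cases i <;> rfl
    · show g₂ (v 0) + ((m + 1 : ℕ) : ℝ) * v 1 = g₁ (v 0)
      rw [← hv]
      exact hg (v 0)
  · rintro ⟨w, hw, hA, hB, hC, hD⟩
    have e0 : w 0 = v 0 := hw 0
    have e1 : w 1 = v 1 := hw 1
    rw [e0] at hA hB
    rw [e1] at hC
    -- hA : g₂ (v 0) = w 2, hB : g₁ (v 0) = w 3, hC : (m+1) * v 1 = w 4, hD : w 2 + w 4 = w 3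
    have hkey : g₂ (v 0) + ((m + 1 : ℕ) : ℝ) * v 1 = g₁ (v 0) := by
      rw [hA, hC, hB]; exact hD
    have := hg (v 0)
    have hmul : ((m + 1 : ℕ) : ℝ) * eps (v 0) = ((m + 1 : ℕ) : ℝ) * v 1 := by
      linarith
    have hne : ((m + 1 : ℕ) : ℝ) ≠ 0 := by positivity
    exact (mul_left_cancel₀ hne hmul)

lemma eps_inv_of_one_le {x : ℝ} (hx : 1 ≤ x) : eps x⁻¹ = Real.exp (-x) := by
  have hx0 : (0 : ℝ) < x := lt_of_lt_of_le one_pos hx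
  have h1 : 0 < x⁻¹ := inv_pos.mpr hx0
  have h2 : x⁻¹ ≤ 1 := inv_le_one_of_one_le₀ hx
  rw [eps, if_pos ⟨h1, h2⟩]
  congr 1
  field_simp

/-- The graph of `exp` restricted to `[1, ∞)` is definable from `eps`. -/
lemma defset_expGe1 (heps : E.DefFun eps) :
    E.DefSet {v : Fin 2 → ℝ | 1 ≤ v 0 ∧ Real.exp (v 0) = v 1} := by
  -- coordinates: 0:x 1:y 2:o(=1) 3:t(=1/x) 4:e(=eps t)
  have hS : E.DefSet
      ({v : Fin 5 → ℝ | v ∘ ![2] ∈ {u : Fin 1 → ℝ | u 0 = 1}} ∩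
       ({v : Fin 5 → ℝ | v ∘ ![2, 0] ∈ {u : Fin 2 → ℝ | u 0 ≤ u 1}} ∩
        ({v : Fin 5 → ℝ | v ∘ ![0, 3, 2] ∈ {u : Fin 3 → ℝ | u 0 * u 1 = u 2}} ∩
         ({v : Fin 5 → ℝ | v ∘ ![3, 4] ∈ {u : Fin 2 → ℝ | eps (u 0) = u 1}} ∩
          {v : Fin 5 → ℝ | v ∘ ![1, 4, 2] ∈ {u : Fin 3 → ℝ | u 0 * u 1 = u 2}})))) :=
    defset_inter (defset_lift _ defset_one)
      (defset_inter (defset_lift _ E.definable_le)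
        (defset_inter (defset_lift _ E.definable_mul)
          (defset_inter (defset_lift _ heps) (defset_lift _ E.definable_mul))))
  have h := defset_exists (n := 2) (k := 3) hS
  apply defset_congr h
  ext v
  simp only [Set.mem_setOf_eq, Set.mem_inter_iff, Function.comp_apply,
    Matrix.cons_val_zero, Matrix.cons_val_one, Matrix.head_cons, Matrix.cons_val_two,
    Matrix.tail_cons]
  constructor
  · rintro ⟨hx1, hy⟩
    have hx0 : (0 : ℝ) < v 0 := lt_of_lt_of_le one_pos hx1
    refine ⟨![v 0, v 1, 1, (v 0)⁻¹, Real.exp (-(v 0))], ?_, rfl, hx1, ?_, ?_, ?_⟩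
    · intro i; fin_cases i <;> rfl
    · exact mul_inv_cancel₀ (ne_of_gt hx0)
    · exact eps_inv_of_one_le hx1
    · show v 1 * Real.exp (-(v 0)) = 1
      rw [← hy, ← Real.exp_add]
      simp
  · rintro ⟨w, hw, hO, hL, hM1, hE, hM2⟩
    have e0 : w 0 = v 0 := hw 0
    have e1 : w 1 = v 1 := hw 1
    rw [e0] at hL hM1
    rw [e1] at hM2
    rw [hO] at hL hM1 hM2
    -- hL : 1 ≤ v 0, hM1 : v 0 * w 3 = 1, hE : eps (w 3) = w 4, hM2 : v 1 * w 4 = 1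
    have hx0 : (0 : ℝ) < v 0 := lt_of_lt_of_le one_pos hL
    have ht : w 3 = (v 0)⁻¹ := eq_inv_of_mul_eq_one_left (by rw [mul_comm]; exact hM1)
    rw [ht, eps_inv_of_one_le hL] at hE
    rw [← hE] at hM2
    refine ⟨hL, ?_⟩
    have hy : v 1 = Real.exp (v 0) := by
      have h := congrArg (· * Real.exp (v 0)) hM2
      simp only [mul_assoc, ← Real.exp_add, neg_add_cancel, Real.exp_zero, mul_one,
        one_mul] at h
      exact h
    exact hy.symm

/-- The full graph of `exp` is definable from its restriction to `[1, ∞)`. -/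
lemma defFun_exp_of_expGe1
    (h : E.DefSet {v : Fin 2 → ℝ | 1 ≤ v 0 ∧ Real.exp (v 0) = v 1}) :
    E.DefFun Real.exp := by
  -- coordinates: 0:x 1:y 2:u 3:w(=x+u) 4:a(=exp u) 5:b(=exp w)
  have hS : E.DefSet
      ({v : Fin 6 → ℝ | v ∘ ![2, 4] ∈ {u : Fin 2 → ℝ | 1 ≤ u 0 ∧ Real.exp (u 0) = u 1}} ∩
       ({v : Fin 6 → ℝ | v ∘ ![3, 5] ∈ {u : Fin 2 → ℝ | 1 ≤ u 0 ∧ Real.exp (u 0) = u 1}} ∩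
        ({v : Fin 6 → ℝ | v ∘ ![0, 2, 3] ∈ {u : Fin 3 → ℝ | u 0 + u 1 = u 2}} ∩
         {v : Fin 6 → ℝ | v ∘ ![1, 4, 5] ∈ {u : Fin 3 → ℝ | u 0 * u 1 = u 2}}))) :=
    defset_inter (defset_lift _ h)
      (defset_inter (defset_lift _ h)
        (defset_inter (defset_lift _ E.definable_add) (defset_lift _ E.definable_mul)))
  have hP := defset_exists (n := 2) (k := 4) hS
  apply defset_congr hP
  ext v
  simp only [Set.mem_setOf_eq, Set.mem_inter_iff, Function.comp_apply,
    Matrix.cons_val_zero, Matrix.cons_val_one, Matrix.head_cons, Matrix.cons_val_two,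
    Matrix.tail_cons]
  constructor
  · intro hv
    set u := max 1 (1 - v 0) with hu
    refine ⟨![v 0, v 1, u, v 0 + u, Real.exp u, Real.exp (v 0 + u)], ?_, ?_, ?_, ?_, ?_⟩
    · intro i; fin_cases i <;> rfl
    · exact ⟨le_max_left _ _, rfl⟩
    · constructor
      · show (1 : ℝ) ≤ v 0 + u
        have : 1 - v 0 ≤ u := le_max_right _ _
        linarith
      · rfl
    · rfl
    · show v 1 * Real.exp u = Real.exp (v 0 + u)
      rw [← hv, ← Real.exp_add]
  · rintro ⟨w, hw, ⟨_, hA⟩, ⟨_, hB⟩, hadd, hmul⟩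
    have e0 : w 0 = v 0 := hw 0
    have e1 : w 1 = v 1 := hw 1
    rw [e0] at hadd
    rw [e1] at hmul
    -- hA : exp (w 2) = w 4, hB : exp (w 3) = w 5, hadd : v 0 + w 2 = w 3,
    -- hmul : v 1 * w 4 = w 5
    rw [← hA, ← hB, ← hadd, Real.exp_add] at hmul
    have : v 1 = Real.exp (v 0) :=
      mul_right_cancel₀ (Real.exp_ne_zero _) hmul
    exact this.symm

end Statement9Helpers

/-- If an expansion of the real ordered field defines `f + n₁·ε` and `f + n₂·ε` for some
`n₁ ≠ n₂`, then it defines the real exponential function; in particular it is not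
polynomially bounded. -/
theorem statement9 (f : ℝ → ℝ) (n₁ n₂ : ℕ) (hne : n₁ ≠ n₂) (E : OFExpansion ℝ)
    (h₁ : E.DefFun fun x => f x + (n₁ : ℝ) * eps x)
    (h₂ : E.DefFun fun x => f x + (n₂ : ℝ) * eps x) :
    E.DefFun Real.exp ∧ ¬ PolyBddE E := by
  have heps : E.DefFun eps := by
    rcases Nat.lt_or_ge n₁ n₂ with h | h
    · refine defFun_eps (k := n₂ - n₁) (Nat.sub_ne_zero_of_lt h) ?_ h₂ h₁
      intro x
      have hc : ((n₂ - n₁ : ℕ) : ℝ) = (n₂ : ℝ) - (n₁ : ℝ) := by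
        rw [Nat.cast_sub h.le]
      rw [hc]; ring
    · have h' : n₂ < n₁ := lt_of_le_of_ne h (Ne.symm hne)
      refine defFun_eps (k := n₁ - n₂) (Nat.sub_ne_zero_of_lt h') ?_ h₁ h₂
      intro x
      have hc : ((n₁ - n₂ : ℕ) : ℝ) = (n₁ : ℝ) - (n₂ : ℝ) := by
        rw [Nat.cast_sub h'.le]
      rw [hc]; ring
  have hExp : E.DefFun Real.exp := defFun_exp_of_expGe1 (defset_expGe1 heps)
  refine ⟨hExp, ?_⟩
  intro hP
  obtain ⟨d, M, hM⟩ := hP Real.exp hExp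
  obtain ⟨x, hx1, hx2⟩ := (((Real.tendsto_exp_div_pow_atTop d).eventually_gt_atTop 1).and
    (Filter.eventually_ge_atTop (max M 1))).exists
  have hxM : M ≤ x := le_trans (le_max_left _ _) hx2
  have hx1' : (1 : ℝ) ≤ x := le_trans (le_max_right _ _) hx2
  have hpow : (0 : ℝ) < x ^ d := pow_pos (lt_of_lt_of_le one_pos hx1') d
  have hlt : x ^ d < Real.exp x := by
    calc x ^ d = 1 * x ^ d := (one_mul _).symm
    _ < Real.exp x / x ^ d * x ^ d := mul_lt_mul_of_pos_right hx1 hpow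
    _ = Real.exp x := div_mul_cancel₀ _ (ne_of_gt hpow)
  have hle := hM x hxM
  rw [abs_of_pos (Real.exp_pos x)] at hle
  linarith
end
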